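/- Every point of the target segment is an accumulation point of the node positions: for every x ∈ [−1, 1], the point (x, T(x)) ∈ ℝ² is a limit of a sequence of points of P all distinct from (x, T(x)); equivalently, (x, T(x)) belongs to the closure of P \ {(x, T(x))}. -/
import Mathlib


open Set

/-- The affine function whose graph over `[-1,1]` is the target segment
joining `(-1, s₀)` to `(1, t₀)`. -/
noncomputable def Tline (s₀ t₀ x : ℝ) : ℝ := (s₀ + t₀) / 2 + ((t₀ - s₀) / 2) * x

/-- The smallest set of nodes `((x, τ), (s, t), d)` generated by the
root, delay and split rules of the slanted firing squad algorithm. -/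
inductive Node (s₀ t₀ : ℝ) : (ℝ × ℝ) × (ℝ × ℝ) × ℕ → Prop
  | root : Node s₀ t₀ ((0, 0), (s₀, t₀), 0)
  | delay {x τ s t : ℝ} {d : ℕ} :
      Node s₀ t₀ ((x, τ), (s, t), d) → 2 ≤ s → 2 ≤ t →
      Node s₀ t₀ ((x, τ + (2:ℝ)^(-(d:ℤ))), (s - 1, t - 1), d)
  | splitL {x τ s t : ℝ} {d : ℕ} :
      Node s₀ t₀ ((x, τ), (s, t), d) → s < 2 ∨ t < 2 →
      Node s₀ t₀ ((x - (2:ℝ)^(-((d:ℤ)+1)), τ + (2:ℝ)^(-((d:ℤ)+1))),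
        (2*s - 1, s + t - 1), d + 1)
  | splitR {x τ s t : ℝ} {d : ℕ} :
      Node s₀ t₀ ((x, τ), (s, t), d) → s < 2 ∨ t < 2 →
      Node s₀ t₀ ((x + (2:ℝ)^(-((d:ℤ)+1)), τ + (2:ℝ)^(-((d:ℤ)+1))),
        (s + t - 1, 2*t - 1), d + 1)

def NInv (s₀ t₀ x τ s t : ℝ) (d : ℕ) : Prop :=
  1 ≤ s ∧ 1 ≤ t ∧ t - s = t₀ - s₀ ∧
    τ = Tline s₀ t₀ x - (s + t) / 2 * (2:ℝ) ^ (-(d:ℤ))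

lemma zpow_succ_neg (d : ℕ) : (2:ℝ)^(-((d:ℤ)+1)) = (2:ℝ)^(-(d:ℤ)) / 2 := by
  rw [neg_add, zpow_add₀ (two_ne_zero), zpow_neg_one]
  ring

lemma cast_succ_neg (d : ℕ) : (2:ℝ)^(-((d+1:ℕ):ℤ)) = (2:ℝ)^(-(d:ℤ)) / 2 := by
  rw [← zpow_succ_neg]; norm_num

lemma ninv_delay {s₀ t₀ x τ s t : ℝ} {d : ℕ} (h : NInv s₀ t₀ x τ s t d)
    (hs : 2 ≤ s) (ht : 2 ≤ t) :
    NInv s₀ t₀ x (τ + (2:ℝ)^(-(d:ℤ))) (s-1) (t-1) d := by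
  obtain ⟨h1, h2, h3, h4⟩ := h
  refine ⟨by linarith, by linarith, by linarith, ?_⟩
  rw [h4]; ring

lemma ninv_splitL {s₀ t₀ x τ s t : ℝ} {d : ℕ} (h : NInv s₀ t₀ x τ s t d) :
    NInv s₀ t₀ (x - (2:ℝ)^(-((d:ℤ)+1))) (τ + (2:ℝ)^(-((d:ℤ)+1))) (2*s-1) (s+t-1) (d+1) := by
  obtain ⟨h1, h2, h3, h4⟩ := h
  refine ⟨by linarith, by linarith, by linarith, ?_⟩
  rw [cast_succ_neg, zpow_succ_neg, h4]
  simp only [Tline]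
  linear_combination (-(2:ℝ)^(-(d:ℤ))/4) * h3

lemma ninv_splitR {s₀ t₀ x τ s t : ℝ} {d : ℕ} (h : NInv s₀ t₀ x τ s t d) :
    NInv s₀ t₀ (x + (2:ℝ)^(-((d:ℤ)+1))) (τ + (2:ℝ)^(-((d:ℤ)+1))) (s+t-1) (2*t-1) (d+1) := by
  obtain ⟨h1, h2, h3, h4⟩ := h
  refine ⟨by linarith, by linarith, by linarith, ?_⟩
  rw [cast_succ_neg, zpow_succ_neg, h4]
  simp only [Tline]
  linear_combination ((2:ℝ)^(-(d:ℤ))/4) * h3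

/-- One full step: delays followed by one split, descending toward `y`. -/
lemma step_lemma (s₀ t₀ : ℝ) (y : ℝ) :
    ∀ m : ℕ, ∀ x τ s t : ℝ, ∀ d : ℕ,
    Node s₀ t₀ ((x, τ), (s, t), d) → NInv s₀ t₀ x τ s t d → s + t ≤ (m:ℝ) →
    |y - x| ≤ (2:ℝ)^(-(d:ℤ)) →
    ∃ x' τ' s' t' : ℝ, Node s₀ t₀ ((x', τ'), (s', t'), d+1) ∧
      NInv s₀ t₀ x' τ' s' t' (d+1) ∧ |y - x'| ≤ (2:ℝ)^(-((d+1:ℕ):ℤ)) ∧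
      s' + t' ≤ 6 + 4 * |t₀ - s₀| := by
  intro m
  induction m with
  | zero =>
    intro x τ s t d _ hinv hsum _
    obtain ⟨h1, h2, _, _⟩ := hinv
    exfalso; push_cast at hsum; linarith
  | succ m ih =>
    intro x τ s t d hnode hinv hsum hdist
    have epos : (0:ℝ) < (2:ℝ)^(-(d:ℤ)) := by positivity
    obtain ⟨h1, h2, h3, h4⟩ := hinv
    by_cases hsplit : s < 2 ∨ t < 2
    · -- split toward y
      have habs1 : t₀ - s₀ ≤ |t₀ - s₀| := le_abs_self _
      have habs2 : -|t₀ - s₀| ≤ t₀ - s₀ := neg_abs_le _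
      have hd1 : |y - x| ≤ (2:ℝ)^(-(d:ℤ)) := hdist
      rw [abs_le] at hd1
      by_cases hy : y ≤ x
      · refine ⟨x - (2:ℝ)^(-((d:ℤ)+1)), τ + (2:ℝ)^(-((d:ℤ)+1)), 2*s-1, s+t-1,
          Node.splitL hnode hsplit, ninv_splitL ⟨h1, h2, h3, h4⟩, ?_, ?_⟩
        · rw [cast_succ_neg, abs_le]
          rw [zpow_succ_neg]
          constructor <;> linarith [hd1.1, hd1.2]
        · rcases hsplit with hs2 | ht2
          · linarith
          · linarith
      · push_neg at hy
        refine ⟨x + (2:ℝ)^(-((d:ℤ)+1)), τ + (2:ℝ)^(-((d:ℤ)+1)), s+t-1, 2*t-1,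
          Node.splitR hnode hsplit, ninv_splitR ⟨h1, h2, h3, h4⟩, ?_, ?_⟩
        · rw [cast_succ_neg, abs_le]
          rw [zpow_succ_neg]
          constructor <;> linarith [hd1.1, hd1.2]
        · rcases hsplit with hs2 | ht2
          · linarith
          · linarith
    · push_neg at hsplit
      obtain ⟨hs2, ht2⟩ := hsplit
      have hsum' : (s-1) + (t-1) ≤ (m:ℝ) := by push_cast at hsum ⊢; linarith
      exact ih x (τ + (2:ℝ)^(-(d:ℤ))) (s-1) (t-1) d
        (Node.delay hnode hs2 ht2) (ninv_delay ⟨h1, h2, h3, h4⟩ hs2 ht2) hsum' hdist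

/-- Nodes at arbitrarily large depth close to `x`. -/
lemma key_lemma (s₀ t₀ : ℝ) (hs₀ : 1 ≤ s₀) (ht₀ : 1 ≤ t₀)
    (x : ℝ) (hx : x ∈ Set.Icc (-1 : ℝ) 1) (k : ℕ) :
    ∃ x' τ' s' t' : ℝ, ∃ d : ℕ, Node s₀ t₀ ((x', τ'), (s', t'), d) ∧
      NInv s₀ t₀ x' τ' s' t' d ∧ k ≤ d ∧ |x - x'| ≤ (2:ℝ)^(-(d:ℤ)) ∧
      s' + t' ≤ max (s₀ + t₀) (6 + 4 * |t₀ - s₀|) := by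
  induction k with
  | zero =>
    refine ⟨0, 0, s₀, t₀, 0, Node.root, ⟨hs₀, ht₀, rfl, ?_⟩, le_refl 0, ?_, le_max_left _ _⟩
    · simp [Tline]
    · simpa using abs_le.2 ⟨by linarith [hx.1], by linarith [hx.2]⟩
  | succ k ih =>
    obtain ⟨x', τ', s', t', d, hnode, hinv, hkd, hdist, _⟩ := ih
    obtain ⟨x'', τ'', s'', t'', hnode', hinv', hdist', hsum'⟩ :=
      step_lemma s₀ t₀ x (⌈s' + t'⌉₊) x' τ' s' t' d hnode hinv (Nat.le_ceil _) hdist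
    exact ⟨x'', τ'', s'', t'', d+1, hnode', hinv', by omega, hdist',
      le_trans hsum' (le_max_right _ _)⟩

theorem stmt14 (s₀ t₀ : ℝ) (hs₀ : 1 ≤ s₀) (ht₀ : 1 ≤ t₀)
    (x : ℝ) (hx : x ∈ Set.Icc (-1 : ℝ) 1) :
    ((x, Tline s₀ t₀ x) : ℝ × ℝ) ∈
      closure ({p : ℝ × ℝ | ∃ s t : ℝ, ∃ d : ℕ, Node s₀ t₀ (p, (s, t), d)} \
        {(x, Tline s₀ t₀ x)}) := by
  set D := t₀ - s₀ with hD
  set C := max (s₀ + t₀) (6 + 4 * |D|) with hC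
  set K := 1 + |D|/2 + C/2 with hK
  have hC2 : 2 ≤ C := le_trans (by linarith) (le_max_left _ _)
  have hK1 : 1 ≤ K := by have := abs_nonneg D; rw [hK]; linarith
  have hKpos : 0 < K := by linarith
  rw [Metric.mem_closure_iff]
  intro ε hε
  obtain ⟨n, hn⟩ := exists_pow_lt_of_lt_one (div_pos hε hKpos) (by norm_num : (1/2:ℝ) < 1)
  obtain ⟨x', τ', s', t', d, hnode, hinv, hnd, hdist, hsum⟩ :=
    key_lemma s₀ t₀ hs₀ ht₀ x hx n
  set e := (2:ℝ)^(-(d:ℤ)) with he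
  have hepos : 0 < e := by positivity
  have hele : e ≤ (1/2:ℝ)^n := by
    have h1 : (2:ℝ)^(-(n:ℤ)) = (1/2:ℝ)^n := by rw [one_div, inv_pow, ← zpow_natCast, ← zpow_neg]
    rw [he, ← h1]
    exact zpow_le_zpow_right₀ one_le_two (neg_le_neg (by exact_mod_cast hnd))
  have hKe : K * (1/2:ℝ)^n < ε := by
    have := (lt_div_iff₀ hKpos).mp hn
    linarith [this]
  obtain ⟨hi1, hi2, hi3, hi4⟩ := hinv
  have hst2 : 2 ≤ s' + t' := by linarith
  refine ⟨(x', τ'), ⟨⟨s', t', d, hnode⟩, ?_⟩, ?_⟩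
  · intro hmem
    simp only [mem_singleton_iff, Prod.mk.injEq] at hmem
    obtain ⟨hx1, hx2⟩ := hmem
    rw [hx1] at hi4
    nlinarith [mul_pos (show (0:ℝ) < (s'+t')/2 by linarith) hepos]
  · rw [Prod.dist_eq]
    have hq1 : 0 ≤ (s'+t')/2 * e := mul_nonneg (by linarith) hepos.le
    have hq2 : (s'+t')/2 * e ≤ C/2 * e :=
      mul_le_mul_of_nonneg_right (by linarith) hepos.le
    have hTd : Tline s₀ t₀ x - τ' = D/2 * (x - x') + (s'+t')/2 * e := by
      rw [hi4]; simp only [Tline, hD]; ring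
    have hDb : |D/2 * (x - x')| ≤ |D|/2 * e := by
      rw [abs_mul, abs_div, abs_two]
      exact mul_le_mul_of_nonneg_left hdist (by positivity)
    have ht2 : dist (Tline s₀ t₀ x) τ' ≤ (|D|/2 + C/2) * e := by
      rw [Real.dist_eq, hTd]
      calc |D/2*(x-x') + (s'+t')/2*e| ≤ |D/2*(x-x')| + |(s'+t')/2*e| := abs_add_le _ _
        _ ≤ |D|/2*e + (s'+t')/2*e := by rw [abs_of_nonneg hq1]; linarith
        _ ≤ (|D|/2 + C/2) * e := by linarith
    apply max_lt
    · calc dist x x' = |x - x'| := Real.dist_eq _ _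
        _ ≤ e := hdist
        _ ≤ (1/2:ℝ)^n := hele
        _ ≤ K*(1/2:ℝ)^n := le_mul_of_one_le_left (by positivity) hK1
        _ < ε := hKe
    · calc dist (Tline s₀ t₀ x) τ' ≤ (|D|/2 + C/2) * e := ht2
        _ ≤ K * (1/2:ℝ)^n := by
            apply mul_le_mul (by rw [hK]; linarith) hele hepos.le (by linarith)
        _ < ε := hKe
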